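/- The Hosoya index of U_1(6,4) equals 114, which is strictly less than 115, the Hosoya index of U_2(6,4). Hence among unicyclic graphs with segment sequence (6,4), the graph maximizing the Merrifield–Simmons index does not minimize the Hosoya index. -/

import Mathlib

open SimpleGraph

/-- A subtree of `G` is a nonempty connected acyclic subgraph of `G`. -/
def IsSubtree {V : Type*} {G : SimpleGraph V} (H : G.Subgraph) : Prop :=
  H.Connected ∧ H.coe.IsAcyclic

/-- `nk G k` : the number of subtrees of `G` with exactly `k` vertices. -/
noncomputable def nk {V : Type*} (G : SimpleGraph V) (k : ℕ) : ℕ :=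
  Nat.card {H : G.Subgraph // IsSubtree H ∧ H.verts.ncard = k}

/-- number of `k`-vertex subtrees of `G` containing the vertex `v`. -/
noncomputable def nkAt {V : Type*} (G : SimpleGraph V) (v : V) (k : ℕ) : ℕ :=
  Nat.card {H : G.Subgraph // IsSubtree H ∧ v ∈ H.verts ∧ H.verts.ncard = k}

/-- `nT G` : total number of subtrees of `G`, counting the empty subtree once. -/
noncomputable def nT {V : Type*} (G : SimpleGraph V) : ℕ :=
  1 + Nat.card {H : G.Subgraph // IsSubtree H}

/-- number of subtrees of `G` containing the vertex `v`. -/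
noncomputable def nAt {V : Type*} (G : SimpleGraph V) (v : V) : ℕ :=
  Nat.card {H : G.Subgraph // IsSubtree H ∧ v ∈ H.verts}

/-- the path on `n` vertices `0 - 1 - ⋯ - (n-1)`. -/
def pathG (n : ℕ) : SimpleGraph (Fin n) :=
  SimpleGraph.fromRel (fun u v => v.val = u.val + 1)

/-- the cycle on `n` vertices. -/
def cycG (n : ℕ) : SimpleGraph (Fin n) :=
  SimpleGraph.fromRel (fun u v => v.val = u.val + 1 ∨ (u.val = 0 ∧ v.val + 1 = n))

/-- the star on `n` vertices with center `0`. -/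
def starG (n : ℕ) : SimpleGraph (Fin n) :=
  SimpleGraph.fromRel (fun u _ => u.val = 0)

/-- `USnl n l` : the cycle `C_l` (on `0,…,l-1`) with `n - l` pendant vertices attached
to the vertex `0`. -/
def USnl (n l : ℕ) : SimpleGraph (Fin n) :=
  SimpleGraph.fromRel (fun u v =>
    (v.val = u.val + 1 ∧ v.val < l) ∨ (u.val = 0 ∧ v.val + 1 = l) ∨ (u.val = 0 ∧ l ≤ v.val))

/-- `UPnl n l` : the cycle `C_l` (on `0,…,l-1`) with a pendant path of length `n - l`
attached to the vertex `l-1`. -/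
def UPnl (n l : ℕ) : SimpleGraph (Fin n) :=
  SimpleGraph.fromRel (fun u v => v.val = u.val + 1 ∨ (u.val = 0 ∧ v.val + 1 = l))

/-- `US_n` : the star `S_n` together with an edge joining two of its leaves. -/
def USn (n : ℕ) : SimpleGraph (Fin n) := USnl n 3

/-- `UP_n` : a triangle with a pendant path, obtained by identifying a vertex of `C_3`
with an end of `P_{n-2}`. -/
def UPn (n : ℕ) : SimpleGraph (Fin n) := UPnl n 3

/-- the Merrifield–Simmons index: the number of independent vertex subsets
(including the empty set). -/
noncomputable def sigmaG {V : Type*} (G : SimpleGraph V) : ℕ :=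
  Nat.card {s : Set V // ∀ u ∈ s, ∀ v ∈ s, ¬ G.Adj u v}

/-- the Hosoya index: the number of matchings (including the empty one). -/
noncomputable def hosoya {V : Type*} (G : SimpleGraph V) : ℕ :=
  Nat.card {s : Set (Sym2 V) // s ⊆ G.edgeSet ∧
    s.Pairwise (fun e f => ∀ v, ¬(v ∈ e ∧ v ∈ f))}

/-- the Wiener index: the sum of the distances over all unordered pairs of vertices. -/
noncomputable def wiener {V : Type*} [Fintype V] (G : SimpleGraph V) : ℕ :=
  (∑ u : V, ∑ v : V, G.dist u v) / 2

/-!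
Matchings are the subsets of the edge set that are pairwise related by the symmetric relation
"share no vertex". Such subsets are counted by including or excluding one element at a time,
which for matchings is the recurrence `Z(G) = Z(G - e) + Z(G - u - v)` for an edge `e = uv`;
run along the edge lists of the two graphs it evaluates to `114` and `115`. By hand, splitting
at the cut edge next to the cycle gives `Z(U₁(6,4)) = Z(C₆) Z(P₄) + Z(P₅) Z(P₃)
= 18 · 5 + 8 · 3` and `Z(U₂(6,4)) = Z(C₄) Z(P₆) + Z(P₃) Z(P₅) = 7 · 13 + 3 · 8`.
-/

open Finset

section PairwiseSubsets

variable {β : Type*}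

def pairwiseSubsetCount (r : β → β → Prop) [DecidableRel r] : List β → List β → ℕ
  | [], _ => 1
  | b :: l, chosen =>
    pairwiseSubsetCount r l chosen +
      if ∀ c ∈ chosen, r b c then pairwiseSubsetCount r l (b :: chosen) else 0

variable [DecidableEq β]

theorem card_filter_powerset_insert {s : Finset β} {b : β} (hb : b ∉ s)
    (p : Finset β → Prop) [DecidablePred p] :
    #{t ∈ (insert b s).powerset | p t} =
      #{t ∈ s.powerset | p t} + #{t ∈ s.powerset | p (insert b t)} := by
  simp only [card_filter, sum_powerset_insert hb]

theorem pairwiseSubsetCount_eq_card {r : β → β → Prop} [DecidableRel r] [Std.Symm r]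
    {l : List β} (hl : l.Nodup) (chosen : List β) :
    pairwiseSubsetCount r l chosen =
      #(l.toFinset.powerset.filter fun t : Finset β =>
        (t : Set β).Pairwise r ∧ ∀ b ∈ t, ∀ c ∈ chosen, r b c) := by
  induction l generalizing chosen with
  | nil => rfl
  | cons b l ih =>
    obtain ⟨hbl, hl⟩ := List.nodup_cons.1 hl
    have hbt : ∀ t ∈ l.toFinset.powerset, b ∉ t := fun t ht hb =>
      hbl (List.mem_toFinset.1 (mem_powerset.1 ht hb))
    rw [pairwiseSubsetCount, List.toFinset_cons,
      card_filter_powerset_insert (List.mem_toFinset.not.2 hbl), ih hl, ih hl]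
    congr 1
    split_ifs with hb
    · refine congrArg card (filter_congr fun t ht => ?_)
      rw [coe_insert, Set.pairwise_insert_of_symm_of_notMem (hbt t ht)]
      simp only [mem_coe, mem_insert, List.mem_cons, forall_eq_or_imp]
      simp only [Std.Symm.iff _ b, forall_and]
      tauto
    · exact (card_eq_zero.2 (filter_false_of_mem fun t _ h =>
        hb (h.2 b (mem_insert_self b t)))).symm

end PairwiseSubsets

section Hosoya

variable {V : Type*} [Fintype V] [DecidableEq V] (G : SimpleGraph V) [Fintype G.edgeSet]

theorem hosoya_eq_card_filter_powerset :
    hosoya G = #(G.edgeFinset.powerset.filter fun t : Finset (Sym2 V) =>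
      (t : Set (Sym2 V)).Pairwise fun e f => ∀ v, ¬(v ∈ e ∧ v ∈ f)) := by
  rw [hosoya, ← Fintype.card_coe, ← Nat.card_eq_fintype_card]
  refine (Nat.card_congr (Equiv.subtypeEquiv Fintype.finsetEquivSet fun t => ?_)).symm
  rw [mem_filter, mem_powerset, Fintype.finsetEquivSet_apply, ← coe_subset, coe_edgeFinset]

theorem hosoya_eq_pairwiseSubsetCount {l : List (Sym2 V)} (hl : l.Nodup)
    (hG : l.toFinset = G.edgeFinset) :
    hosoya G = pairwiseSubsetCount (fun e f => ∀ v, ¬(v ∈ e ∧ v ∈ f)) l [] := by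
  have : Std.Symm fun e f : Sym2 V => ∀ v, ¬(v ∈ e ∧ v ∈ f) := ⟨fun e f h v hv => h v hv.symm⟩
  rw [hosoya_eq_card_filter_powerset, ← hG, pairwiseSubsetCount_eq_card hl]
  simp

end Hosoya

instance (n l : ℕ) : DecidableRel (UPnl n l).Adj := fun a b =>
  decidable_of_iff _ (fromRel_adj _ a b).symm

def upnlEdges (n l : ℕ) [NeZero n] : List (Sym2 (Fin n)) :=
  s(0, Fin.ofNat n (l - 1)) ::
    (List.range (n - 1)).map fun i => s(Fin.ofNat n i, Fin.ofNat n (i + 1))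

theorem hosoya_UPnl_10_6 : hosoya (UPnl 10 6) = 114 := by
  rw [hosoya_eq_pairwiseSubsetCount _ (l := upnlEdges 10 6) (by decide) (by decide)]
  decide

theorem hosoya_UPnl_10_4 : hosoya (UPnl 10 4) = 115 := by
  rw [hosoya_eq_pairwiseSubsetCount _ (l := upnlEdges 10 4) (by decide) (by decide)]
  decide

/-- `Z(U_1(6,4)) = 114 < 115 = Z(U_2(6,4))`, where `U_1(6,4)` is `C_6`
with a pendant path of length `4` and `U_2(6,4)` is `C_4` with a pendant path of
length `6`. -/
theorem hosoya_counterexample :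
    hosoya (UPnl 10 6) = 114 ∧ hosoya (UPnl 10 4) = 115 ∧
    hosoya (UPnl 10 6) < hosoya (UPnl 10 4) := by
  refine ⟨hosoya_UPnl_10_6, hosoya_UPnl_10_4, ?_⟩
  rw [hosoya_UPnl_10_6, hosoya_UPnl_10_4]
  norm_num
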